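/- arXiv:1608.03304 — 6 statements merged into one kernel-verified Lean document; each statement's English description precedes it below -/
import Mathlib

section
/- Let A : X → X be a (possibly unbounded, densely defined) linear operator on a Hilbert space X, C : X → ℝ^q a bounded finite-rank linear operator, and W a closed subspace such that W ∩ D(A) is dense in W and A(W ∩ ker C ∩ D(A)) ⊆ W. Then there exists a bounded linear operator D : ℝ^q → X such that (A + DC)(W ∩ D(A)) ⊆ W. -/
/-!
Over a field, the restriction `φ` of `C` to `W ∩ D(A)` has a linear generalized inverse
`s : ℝ^q → W ∩ D(A)` with `φ ∘ s ∘ φ = φ`. With the output injection `D := -A ∘ s`, every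
`x ∈ W ∩ D(A)` satisfies `(A + DC) x = A (x - s (C x))`, and `x - s (C x)` lies in
`W ∩ ker C ∩ D(A)`, which `A` maps into `W`. Since `ℝ^q` is finite-dimensional, `D` is bounded.
-/

section OutputInjection

variable {K E F G : Type*} [Field K] [AddCommGroup E] [Module K E] [AddCommGroup F] [Module K F]
  [AddCommGroup G] [Module K G]

theorem LinearMap.exists_comp_comp_eq_self (f : E →ₗ[K] G) :
    ∃ s : G →ₗ[K] E, ∀ x, f (s (f x)) = f x := by
  obtain ⟨g, hg⟩ := f.rangeRestrict.exists_rightInverse_of_surjective f.range_rangeRestrict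
  obtain ⟨s, hs⟩ := LinearMap.exists_extend g
  refine ⟨s, fun x => ?_⟩
  let u : LinearMap.range f := ⟨f x, LinearMap.mem_range_self f x⟩
  calc f (s (f x)) = f (g u) := congrArg f (LinearMap.congr_fun hs u)
    _ = f x := congrArg Subtype.val (LinearMap.congr_fun hg u)

theorem LinearPMap.exists_outputInjection (A : E →ₗ.[K] F) (C : E →ₗ[K] G)
    (V : Submodule K E) (W : Submodule K F)
    (hinv : ∀ x (hx : x ∈ A.domain), x ∈ V → C x = 0 → A ⟨x, hx⟩ ∈ W) :
    ∃ D : G →ₗ[K] F, ∀ x (hx : x ∈ A.domain), x ∈ V → A ⟨x, hx⟩ + D (C x) ∈ W := by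
  set M := V ⊓ A.domain
  obtain ⟨s, hs⟩ := (C ∘ₗ M.subtype).exists_comp_comp_eq_self
  refine ⟨-(A.toFun ∘ₗ Submodule.inclusion inf_le_right ∘ₗ s), fun x hx hxV => ?_⟩
  let y : M := s (C x)
  have hCy : C y = C x := hs ⟨x, hxV, hx⟩
  have hxy : x - y ∈ A.domain := sub_mem hx y.2.2
  have hAxy : A ⟨x - y, hxy⟩ = A ⟨x, hx⟩ - A ⟨y, y.2.2⟩ := by
    rw [← A.map_sub]; rfl
  have hmem := hinv (x - y) hxy (sub_mem hxV y.2.1) (by rw [C.map_sub, hCy, sub_self])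
  rw [hAxy, sub_eq_add_neg] at hmem
  exact hmem

end OutputInjection

theorem CA_invariant_iff_feedback_CA_invariant_general
    {X : Type*} [NormedAddCommGroup X] [InnerProductSpace ℝ X] {q : ℕ}
    (A : X →ₗ.[ℝ] X)
    (C : X →L[ℝ] EuclideanSpace ℝ (Fin q))
    (W : Submodule ℝ X)
    (hinv : ∀ x (hx : x ∈ A.domain), x ∈ W → C x = 0 → A ⟨x, hx⟩ ∈ W) :
    ∃ D : EuclideanSpace ℝ (Fin q) →L[ℝ] X,
      ∀ x (hx : x ∈ A.domain), x ∈ W → A ⟨x, hx⟩ + D (C x) ∈ W := by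
  obtain ⟨D, hD⟩ := A.exists_outputInjection (C : X →ₗ[ℝ] EuclideanSpace ℝ (Fin q)) W W hinv
  exact ⟨LinearMap.toContinuousLinearMap D, hD⟩

/-- For a densely defined operator `A` on a separable Hilbert space and a finite-rank
bounded output operator `C : X → ℝ^q`, every closed `(C,A)`-invariant subspace `W` with
`W ∩ D(A)` dense in `W` is feedback `(C,A)`-invariant: there is a bounded output
injection `D` with `(A + DC)(W ∩ D(A)) ⊆ W`. -/
theorem CA_invariant_iff_feedback_CA_invariant
    {X : Type*} [NormedAddCommGroup X] [InnerProductSpace ℝ X] [CompleteSpace X]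
    [TopologicalSpace.SeparableSpace X] {q : ℕ}
    (A : X →ₗ.[ℝ] X) (hdense : Dense (A.domain : Set X))
    (C : X →L[ℝ] EuclideanSpace ℝ (Fin q))
    (W : Submodule ℝ X) (hWclosed : IsClosed (W : Set X))
    (hWdense : closure ((W ⊓ A.domain : Submodule ℝ X) : Set X) = (W : Set X))
    (hinv : ∀ x (hx : x ∈ A.domain), x ∈ W → C x = 0 → A ⟨x, hx⟩ ∈ W) :
    ∃ D : EuclideanSpace ℝ (Fin q) →L[ℝ] X,
      ∀ x (hx : x ∈ A.domain), x ∈ W → A ⟨x, hx⟩ + D (C x) ∈ W :=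
  CA_invariant_iff_feedback_CA_invariant_general A C W hinv
end

section
/- Let A : X → X be a bounded linear operator on a finite-dimensional vector space X, B : ℝ^m → X linear, and V a subspace with A(V) ⊆ V + range(B). Then there exists a linear map F : X → ℝ^m such that (A + B∘F)(V) ⊆ V. -/
/-- In finite dimensions, an `(A,B)`-invariant subspace (`A V ⊆ V + im B`) is feedback
`(A,B)`-invariant: there is `F` with `(A + BF) V ⊆ V`. -/
theorem AB_invariant_implies_feedback
    {X : Type*} [AddCommGroup X] [Module ℝ X] [FiniteDimensional ℝ X] {m : ℕ}
    (A : X →ₗ[ℝ] X) (B : (Fin m → ℝ) →ₗ[ℝ] X) (V : Submodule ℝ X)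
    (h : ∀ v ∈ V, A v ∈ V ⊔ LinearMap.range B) :
    ∃ F : X →ₗ[ℝ] (Fin m → ℝ), ∀ v ∈ V, A v + B (F v) ∈ V := by
  set q := V.mkQ with hq
  set g := q.comp B with hg
  -- for v ∈ V, q (A v) lies in range g
  have hmem : ∀ v : V, q (A v) ∈ LinearMap.range g := by
    intro v
    obtain ⟨w, hw, u, hu, hsum⟩ := Submodule.mem_sup.mp (h v v.2)
    obtain ⟨x, hx⟩ := hu
    refine ⟨x, ?_⟩
    have : q (A v) = q w + q u := by rw [← map_add, hsum]
    rw [hg, LinearMap.comp_apply, hx, this]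
    simp [hq, (Submodule.Quotient.mk_eq_zero V).mpr hw]
  set T : V →ₗ[ℝ] LinearMap.range g :=
    LinearMap.codRestrict (LinearMap.range g) ((q.comp A).comp V.subtype)
      (fun v => hmem v) with hT
  -- split the surjection g.rangeRestrict
  obtain ⟨s, hs⟩ := (g.rangeRestrict).exists_rightInverse_of_surjective
    (LinearMap.range_rangeRestrict g ▸ LinearMap.range_rangeRestrict g)
  -- extend -(s ∘ T) from V to X
  obtain ⟨F, hF⟩ := LinearMap.exists_extend (-(s.comp T))
  refine ⟨F, fun v hv => ?_⟩
  have hFv : F v = -(s (T ⟨v, hv⟩)) := by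
    have := congrArg (fun f => f ⟨v, hv⟩) hF
    simpa using this
  have hgs : g (s (T ⟨v, hv⟩)) = (T ⟨v, hv⟩ : X ⧸ V) := by
    have := congrArg (fun f => f (T ⟨v, hv⟩)) hs
    have h2 : g.rangeRestrict (s (T ⟨v, hv⟩)) = T ⟨v, hv⟩ := this
    exact congrArg Subtype.val h2
  have hTv : (T ⟨v, hv⟩ : X ⧸ V) = q (A v) := rfl
  have hzero : q (A v + B (F v)) = 0 := by
    simp only [hFv, map_neg, map_add]
    rw [← LinearMap.comp_apply q B, ← hg, hgs, hTv, add_neg_cancel]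
  exact (Submodule.Quotient.mk_eq_zero V).mp hzero
end

section
/- Let X be a Hilbert space, A : X → X a bounded linear operator, B : ℝ^m → X linear, and V a closed subspace. V satisfies (A + BF)(V) ⊆ V for some bounded F : X → ℝ^m if and only if the orthogonal complement V^⊥ satisfies (A* + C*D*)(V^⊥) ⊆ V^⊥ for some bounded D, where C = B* ; that is, feedback (A,B)-invariance of V is equivalent to feedback (B*,A*)-invariance of V^⊥. -/
/-- Duality of feedback invariance: a closed subspace `V` is feedback `(A,B)`-invariant
iff `Vᗮ` is feedback `(B*,A*)`-invariant. -/
theorem feedback_AB_invariant_iff_dual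
    {X : Type*} [NormedAddCommGroup X] [InnerProductSpace ℝ X] [CompleteSpace X] {m : ℕ}
    (A : X →L[ℝ] X) (B : EuclideanSpace ℝ (Fin m) →L[ℝ] X)
    (V : Submodule ℝ X) (hVclosed : IsClosed (V : Set X)) :
    (∃ F : X →L[ℝ] EuclideanSpace ℝ (Fin m), ∀ v ∈ V, A v + B (F v) ∈ V) ↔
    (∃ D : EuclideanSpace ℝ (Fin m) →L[ℝ] X, ∀ w ∈ Vᗮ,
        ContinuousLinearMap.adjoint A w + D (ContinuousLinearMap.adjoint B w) ∈ Vᗮ) := by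
  haveI : CompleteSpace V := hVclosed.completeSpace_coe
  constructor
  · rintro ⟨F, hF⟩
    refine ⟨ContinuousLinearMap.adjoint F, fun w hw => ?_⟩
    rw [Submodule.mem_orthogonal]
    intro v hv
    rw [inner_add_right, ContinuousLinearMap.adjoint_inner_right,
      ContinuousLinearMap.adjoint_inner_right, ContinuousLinearMap.adjoint_inner_right,
      ← inner_add_left]
    exact Submodule.inner_right_of_mem_orthogonal (hF v hv) hw
  · rintro ⟨D, hD⟩
    refine ⟨ContinuousLinearMap.adjoint D, fun v hv => ?_⟩
    rw [← V.orthogonal_orthogonal, Submodule.mem_orthogonal]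
    intro w hw
    rw [inner_add_right, ← A.adjoint_inner_left, ← B.adjoint_inner_left,
      D.adjoint_inner_right, ← inner_add_left]
    exact Submodule.inner_left_of_mem_orthogonal hv (hD w hw)
end

section
/- Let A be a diagonalizable operator on a Hilbert space X given by A = Σ_i λ_i ⟨·, ψ_i⟩ φ_i with respect to a Riesz basis (φ_i) with distinct eigenvalues λ_i, and let V be a closed subspace that is invariant under (λI − A)^{-1} for some λ in the resolvent set. Then V is the closed span of the eigenvectors φ_i that it contains: V = closure(span{φ_i : φ_i ∈ V}). -/
/-!
The coefficients `⟪x, ψ k⟫` of every `x` are square-summable (Bessel's inequality, from the lower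
Riesz bound on the dense span of `φ`), and the partial sums of `∑ ⟪x, ψ k⟫ • φ k` are uniformly
bounded, hence converge to `x` everywhere since they do on the span of `φ`. In these coordinates
`R` multiplies the `k`-th coefficient by `r k = (μ - λ k)⁻¹`, so `T = 1 - (R - r i)² / K`, with
`K > (2‖R‖)²`, fixes the `i`-th coefficient and multiplies every other one by a factor of modulus
`< 1`, the `r k` being distinct. As `V` is closed and `T`-invariant, dominated convergence on the
coefficients (controlled by the upper Riesz bound) gives `V ∋ Tⁿ x → ⟪x, ψ i⟫ • φ i`. Hence
`φ i ∈ V` as soon as some `x ∈ V` has `⟪x, ψ i⟫ ≠ 0`, and every `x ∈ V` is the limit of its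
expansion in such `φ i`.
-/

open RealInnerProductSpace Filter Topology

theorem Submodule.exists_finset_sum_smul_eq_of_mem_span_range {R M ι : Type*} [Semiring R]
    [AddCommMonoid M] [Module R M] {v : ι → M} {x : M} (hx : x ∈ span R (Set.range v)) :
    ∃ (t : Finset ι) (d : ι → R), ∑ i ∈ t, d i • v i = x := by
  obtain ⟨c, rfl⟩ := Finsupp.mem_span_range_iff_exists_finsupp.mp hx
  exact ⟨c.support, c, rfl⟩

theorem tendsto_tsum_sq_pow_mul_sub_single {q c : ℕ → ℝ} {i : ℕ}
    (hc : Summable fun k => c k ^ 2) (hqi : q i = 1) (hq : ∀ k ≠ i, |q k| < 1) :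
    Tendsto (fun n => ∑' k, (q k ^ n * c k - c i * if k = i then 1 else 0) ^ 2) atTop (𝓝 0) := by
  have hdom := tendsto_tsum_of_dominated_convergence (𝓕 := atTop) (g := 0)
    (f := fun n k => (q k ^ n * c k - c i * if k = i then 1 else 0) ^ 2) hc ?_ ?_
  · simpa using hdom
  · intro k
    by_cases hk : k = i
    · subst hk; simp [hqi]
    · simpa [hk] using
        ((tendsto_pow_atTop_nhds_zero_of_abs_lt_one (hq k hk)).mul_const (c k)).pow 2
  · refine Eventually.of_forall fun n k => ?_
    by_cases hk : k = i
    · subst hk; simpa [hqi] using sq_nonneg (c k)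
    · have hpow : |q k ^ n| ≤ 1 := by
        rw [abs_pow]; exact pow_le_one₀ (abs_nonneg _) (hq k hk).le
      rw [if_neg hk, mul_zero, sub_zero, Real.norm_eq_abs, abs_pow, sq_abs, mul_pow]
      exact mul_le_of_le_one_left (sq_nonneg _) ((sq_le_one_iff_abs_le_one _).mpr hpow)

section RieszBasis

variable {X : Type*} [NormedAddCommGroup X] [InnerProductSpace ℝ X] {φ ψ : ℕ → X}

theorem inner_sum_smul_eq_ite (hbi : ∀ i k : ℕ, ⟪ψ i, φ k⟫ = if i = k then (1 : ℝ) else 0)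
    (t : Finset ℕ) (d : ℕ → ℝ) (j : ℕ) :
    ⟪∑ k ∈ t, d k • φ k, ψ j⟫ = if j ∈ t then d j else 0 := by
  have hφψ : ∀ k, ⟪φ k, ψ j⟫ = if j = k then 1 else 0 := fun k => by rw [real_inner_comm, hbi]
  simp [sum_inner, real_inner_smul_left, hφψ]

theorem inner_eq_of_hasSum (hbi : ∀ i k : ℕ, ⟪ψ i, φ k⟫ = if i = k then (1 : ℝ) else 0)
    {a : ℕ → ℝ} {y : X} (hy : HasSum (fun k => a k • φ k) y) (j : ℕ) : ⟪y, ψ j⟫ = a j := by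
  have h := (innerSL ℝ (ψ j)).hasSum hy
  simp only [innerSL_apply_apply, real_inner_smul_right, hbi, mul_ite, mul_one, mul_zero] at h
  rw [real_inner_comm, h.unique (hasSum_single j fun k hk => if_neg hk.symm), if_pos rfl]

theorem riesz_bounds_finset {M₁ M₂ : ℝ}
    (hriesz : ∀ (n : ℕ) (α : ℕ → ℝ),
      M₁ * ∑ k ∈ Finset.range n, (α k) ^ 2 ≤ ‖∑ k ∈ Finset.range n, α k • φ k‖ ^ 2 ∧
      ‖∑ k ∈ Finset.range n, α k • φ k‖ ^ 2 ≤ M₂ * ∑ k ∈ Finset.range n, (α k) ^ 2)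
    (s : Finset ℕ) (α : ℕ → ℝ) :
    M₁ * ∑ k ∈ s, α k ^ 2 ≤ ‖∑ k ∈ s, α k • φ k‖ ^ 2 ∧
      ‖∑ k ∈ s, α k • φ k‖ ^ 2 ≤ M₂ * ∑ k ∈ s, α k ^ 2 := by
  classical
  obtain ⟨N, hN⟩ := s.exists_nat_subset_range
  simpa [ite_pow, ite_smul, Finset.sum_ite_mem, Finset.inter_eq_right.mpr hN] using
    hriesz N fun k => if k ∈ s then α k else 0

theorem mul_sum_sq_inner_le_norm_sq
    (hbi : ∀ i k : ℕ, ⟪ψ i, φ k⟫ = if i = k then (1 : ℝ) else 0)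
    (hspan : (Submodule.span ℝ (Set.range φ)).topologicalClosure = ⊤)
    {M₁ : ℝ} (hM₁ : 0 ≤ M₁)
    (hlower : ∀ (s : Finset ℕ) (α : ℕ → ℝ), M₁ * ∑ k ∈ s, α k ^ 2 ≤ ‖∑ k ∈ s, α k • φ k‖ ^ 2)
    (x : X) (s : Finset ℕ) : M₁ * ∑ k ∈ s, ⟪x, ψ k⟫ ^ 2 ≤ ‖x‖ ^ 2 := by
  classical
  refine (Submodule.dense_iff_topologicalClosure_eq_top.mpr hspan).induction
    (P := fun x => M₁ * ∑ k ∈ s, ⟪x, ψ k⟫ ^ 2 ≤ ‖x‖ ^ 2) (fun v hv => ?_)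
    (isClosed_le (by fun_prop) (by fun_prop)) x
  obtain ⟨t, d, rfl⟩ := Submodule.exists_finset_sum_smul_eq_of_mem_span_range hv
  calc M₁ * ∑ k ∈ s, ⟪∑ j ∈ t, d j • φ j, ψ k⟫ ^ 2 = M₁ * ∑ k ∈ s ∩ t, d k ^ 2 := by
        simp [inner_sum_smul_eq_ite hbi, ite_pow, Finset.sum_ite_mem]
    _ ≤ M₁ * ∑ k ∈ t, d k ^ 2 := mul_le_mul_of_nonneg_left
        (Finset.sum_le_sum_of_subset_of_nonneg Finset.inter_subset_right
          fun _ _ _ => sq_nonneg _) hM₁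
    _ ≤ _ := hlower t d

theorem summable_sq_inner
    (hbi : ∀ i k : ℕ, ⟪ψ i, φ k⟫ = if i = k then (1 : ℝ) else 0)
    (hspan : (Submodule.span ℝ (Set.range φ)).topologicalClosure = ⊤)
    {M₁ : ℝ} (hM₁ : 0 < M₁)
    (hlower : ∀ (s : Finset ℕ) (α : ℕ → ℝ), M₁ * ∑ k ∈ s, α k ^ 2 ≤ ‖∑ k ∈ s, α k • φ k‖ ^ 2)
    (x : X) : Summable fun k => ⟪x, ψ k⟫ ^ 2 :=
  summable_of_sum_le (c := ‖x‖ ^ 2 / M₁) (fun _ => sq_nonneg _) fun s =>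
    (le_div_iff₀' hM₁).mpr (mul_sum_sq_inner_le_norm_sq hbi hspan hM₁.le hlower x s)

variable (φ ψ) in
noncomputable def expansionPartialSum (n : ℕ) : X →L[ℝ] X :=
  ∑ k ∈ Finset.range n, (innerSL ℝ (ψ k)).smulRight (φ k)

theorem expansionPartialSum_apply (n : ℕ) (x : X) :
    expansionPartialSum φ ψ n x = ∑ k ∈ Finset.range n, ⟪x, ψ k⟫ • φ k := by
  simp [expansionPartialSum, real_inner_comm x]

theorem expansionPartialSum_sum_smul
    (hbi : ∀ i k : ℕ, ⟪ψ i, φ k⟫ = if i = k then (1 : ℝ) else 0)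
    {t : Finset ℕ} {n : ℕ} (ht : t ⊆ Finset.range n) (d : ℕ → ℝ) :
    expansionPartialSum φ ψ n (∑ k ∈ t, d k • φ k) = ∑ k ∈ t, d k • φ k := by
  classical
  simp_rw [expansionPartialSum_apply, inner_sum_smul_eq_ite hbi, ite_smul, zero_smul]
  rw [Finset.sum_ite_mem, Finset.inter_eq_right.mpr ht]

theorem norm_expansionPartialSum_le
    (hbi : ∀ i k : ℕ, ⟪ψ i, φ k⟫ = if i = k then (1 : ℝ) else 0)
    (hspan : (Submodule.span ℝ (Set.range φ)).topologicalClosure = ⊤)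
    {M₁ M₂ : ℝ} (hM₁ : 0 < M₁) (hM₂ : 0 ≤ M₂)
    (hlower : ∀ (s : Finset ℕ) (α : ℕ → ℝ), M₁ * ∑ k ∈ s, α k ^ 2 ≤ ‖∑ k ∈ s, α k • φ k‖ ^ 2)
    (hupper : ∀ (s : Finset ℕ) (α : ℕ → ℝ), ‖∑ k ∈ s, α k • φ k‖ ^ 2 ≤ M₂ * ∑ k ∈ s, α k ^ 2)
    (n : ℕ) (x : X) : ‖expansionPartialSum φ ψ n x‖ ≤ √(M₂ / M₁) * ‖x‖ := by
  have hsq : ‖expansionPartialSum φ ψ n x‖ ^ 2 ≤ M₂ / M₁ * ‖x‖ ^ 2 :=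
    calc ‖expansionPartialSum φ ψ n x‖ ^ 2
        ≤ M₂ * ∑ k ∈ Finset.range n, ⟪x, ψ k⟫ ^ 2 := by
          rw [expansionPartialSum_apply]; exact hupper _ _
      _ ≤ M₂ * (‖x‖ ^ 2 / M₁) := by
          gcongr
          exact (le_div_iff₀' hM₁).mpr (mul_sum_sq_inner_le_norm_sq hbi hspan hM₁.le hlower x _)
      _ = M₂ / M₁ * ‖x‖ ^ 2 := by ring
  simpa [Real.sqrt_mul' _ (sq_nonneg _)] using Real.sqrt_le_sqrt hsq

theorem tendsto_expansionPartialSum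
    (hbi : ∀ i k : ℕ, ⟪ψ i, φ k⟫ = if i = k then (1 : ℝ) else 0)
    (hspan : (Submodule.span ℝ (Set.range φ)).topologicalClosure = ⊤)
    {M₁ M₂ : ℝ} (hM₁ : 0 < M₁) (hM₂ : 0 ≤ M₂)
    (hlower : ∀ (s : Finset ℕ) (α : ℕ → ℝ), M₁ * ∑ k ∈ s, α k ^ 2 ≤ ‖∑ k ∈ s, α k • φ k‖ ^ 2)
    (hupper : ∀ (s : Finset ℕ) (α : ℕ → ℝ), ‖∑ k ∈ s, α k • φ k‖ ^ 2 ≤ M₂ * ∑ k ∈ s, α k ^ 2)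
    (x : X) : Tendsto (fun n => expansionPartialSum φ ψ n x) atTop (𝓝 x) := by
  have hequi : Equicontinuous fun n => ⇑(expansionPartialSum φ ψ n) :=
    (LipschitzWith.uniformEquicontinuous _ _ fun n =>
      AddMonoidHomClass.lipschitz_of_bound _ _
        (norm_expansionPartialSum_le hbi hspan hM₁ hM₂ hlower hupper n)).equicontinuous
  refine (Submodule.dense_iff_topologicalClosure_eq_top.mpr hspan).induction
    (P := fun x => Tendsto (fun n => expansionPartialSum φ ψ n x) atTop (𝓝 x)) (fun v hv => ?_)
    (hequi.isClosed_setOfPred_tendsto continuous_id) x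
  obtain ⟨t, d, rfl⟩ := Submodule.exists_finset_sum_smul_eq_of_mem_span_range hv
  obtain ⟨N, hN⟩ := t.exists_nat_subset_range
  refine tendsto_const_nhds.congr' (eventually_atTop.mpr ⟨N, fun n hn => ?_⟩)
  exact (expansionPartialSum_sum_smul hbi (hN.trans (Finset.range_subset_range.mpr hn)) d).symm

theorem norm_sq_le_mul_tsum_sq_inner {M₂ : ℝ} (hM₂ : 0 ≤ M₂)
    (hupper : ∀ (s : Finset ℕ) (α : ℕ → ℝ), ‖∑ k ∈ s, α k • φ k‖ ^ 2 ≤ M₂ * ∑ k ∈ s, α k ^ 2)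
    {z : X} (hz : Tendsto (fun n => expansionPartialSum φ ψ n z) atTop (𝓝 z))
    (hsum : Summable fun k => ⟪z, ψ k⟫ ^ 2) : ‖z‖ ^ 2 ≤ M₂ * ∑' k, ⟪z, ψ k⟫ ^ 2 := by
  refine le_of_tendsto' ((continuous_norm.pow 2).continuousAt.tendsto.comp hz) fun n => ?_
  calc ‖expansionPartialSum φ ψ n z‖ ^ 2 ≤ M₂ * ∑ k ∈ Finset.range n, ⟪z, ψ k⟫ ^ 2 := by
        rw [expansionPartialSum_apply]; exact hupper _ _
    _ ≤ M₂ * ∑' k, ⟪z, ψ k⟫ ^ 2 := by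
        gcongr
        exact hsum.sum_le_tsum _ fun _ _ => sq_nonneg _

theorem inner_iterate_eq_pow_mul {T : X → X} {w : X} {a : ℝ} (hT : ∀ x, ⟪T x, w⟫ = a * ⟪x, w⟫)
    (n : ℕ) (x : X) : ⟪T^[n] x, w⟫ = a ^ n * ⟪x, w⟫ := by
  induction n with
  | zero => simp
  | succ n ih => rw [Function.iterate_succ_apply', hT, ih, pow_succ]; ring

theorem inner_smul_mem_of_mapsTo
    (hbi : ∀ i k : ℕ, ⟪ψ i, φ k⟫ = if i = k then (1 : ℝ) else 0)
    {M₂ : ℝ} (hM₂ : 0 ≤ M₂)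
    (hupper : ∀ (s : Finset ℕ) (α : ℕ → ℝ), ‖∑ k ∈ s, α k • φ k‖ ^ 2 ≤ M₂ * ∑ k ∈ s, α k ^ 2)
    (hexp : ∀ z, Tendsto (fun n => expansionPartialSum φ ψ n z) atTop (𝓝 z))
    (hsum : ∀ z, Summable fun k => ⟪z, ψ k⟫ ^ 2)
    {T : X → X} {q : ℕ → ℝ} {i : ℕ} (hT : ∀ x k, ⟪T x, ψ k⟫ = q k * ⟪x, ψ k⟫)
    (hqi : q i = 1) (hq : ∀ k ≠ i, |q k| < 1)
    {V : Set X} (hV : IsClosed V) (hTV : Set.MapsTo T V V) {x : X} (hx : x ∈ V) :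
    ⟪x, ψ i⟫ • φ i ∈ V := by
  have hcoeff : ∀ n k, ⟪T^[n] x - ⟪x, ψ i⟫ • φ i, ψ k⟫
      = q k ^ n * ⟪x, ψ k⟫ - ⟪x, ψ i⟫ * if k = i then 1 else 0 := fun n k => by
    rw [inner_sub_left, real_inner_smul_left, inner_iterate_eq_pow_mul (hT · k),
      real_inner_comm (ψ k) (φ i), hbi]
  have hsq : Tendsto (fun n => ‖T^[n] x - ⟪x, ψ i⟫ • φ i‖ ^ 2) atTop (𝓝 0) := by
    refine squeeze_zero (fun _ => sq_nonneg _)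
      (fun n => norm_sq_le_mul_tsum_sq_inner hM₂ hupper (hexp _) (hsum _)) ?_
    simp_rw [hcoeff]
    simpa using (tendsto_tsum_sq_pow_mul_sub_single (hsum x) hqi hq).const_mul M₂
  have hlim : Tendsto (fun n => T^[n] x) atTop (𝓝 (⟪x, ψ i⟫ • φ i)) := by
    rw [tendsto_iff_norm_sub_tendsto_zero]
    simpa [Real.sqrt_sq (norm_nonneg _)] using hsq.sqrt
  exact hV.mem_of_tendsto hlim (Eventually.of_forall fun n => hTV.iterate n hx)

variable {R : X →L[ℝ] X} {r : ℕ → ℝ}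

theorem apply_eq_smul_of_hasSum (hbi : ∀ i k : ℕ, ⟪ψ i, φ k⟫ = if i = k then (1 : ℝ) else 0)
    (hR : ∀ x, HasSum (fun k => (r k * ⟪x, ψ k⟫) • φ k) (R x)) (k : ℕ) :
    R (φ k) = r k • φ k := by
  have hφψ : ∀ j, ⟪φ k, ψ j⟫ = if j = k then 1 else 0 := fun j => by rw [real_inner_comm, hbi]
  rw [(hR (φ k)).unique (hasSum_single k fun j hj => by simp [hφψ, hj]), hφψ, if_pos rfl,
    mul_one]

theorem abs_le_opNorm_of_hasSum (hbi : ∀ i k : ℕ, ⟪ψ i, φ k⟫ = if i = k then (1 : ℝ) else 0)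
    (hR : ∀ x, HasSum (fun k => (r k * ⟪x, ψ k⟫) • φ k) (R x)) (k : ℕ) : |r k| ≤ ‖R‖ := by
  have hφ : φ k ≠ 0 := fun h => by simpa [h] using hbi k k
  have h := R.le_opNorm (φ k)
  rw [apply_eq_smul_of_hasSum hbi hR, norm_smul, Real.norm_eq_abs] at h
  exact le_of_mul_le_mul_right h (norm_pos_iff.mpr hφ)

theorem mem_of_inner_ne_zero (hbi : ∀ i k : ℕ, ⟪ψ i, φ k⟫ = if i = k then (1 : ℝ) else 0)
    {M₂ : ℝ} (hM₂ : 0 ≤ M₂)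
    (hupper : ∀ (s : Finset ℕ) (α : ℕ → ℝ), ‖∑ k ∈ s, α k • φ k‖ ^ 2 ≤ M₂ * ∑ k ∈ s, α k ^ 2)
    (hexp : ∀ z, Tendsto (fun n => expansionPartialSum φ ψ n z) atTop (𝓝 z))
    (hsum : ∀ z, Summable fun k => ⟪z, ψ k⟫ ^ 2)
    (hR : ∀ x, HasSum (fun k => (r k * ⟪x, ψ k⟫) • φ k) (R x)) (hr : Function.Injective r)
    {V : Submodule ℝ X} (hV : IsClosed (V : Set X)) (hRV : ∀ x ∈ V, R x ∈ V)
    {x : X} (hx : x ∈ V) {i : ℕ} (hi : ⟪x, ψ i⟫ ≠ 0) : φ i ∈ V := by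
  set K := (2 * ‖R‖) ^ 2 + 1
  let D : X → X := fun y => R y - r i • y
  have hDV : Set.MapsTo D V V := fun y hy => V.sub_mem (hRV y hy) (V.smul_mem _ hy)
  have hRψ : ∀ z k, ⟪R z, ψ k⟫ = r k * ⟪z, ψ k⟫ := fun z k => inner_eq_of_hasSum hbi (hR z) k
  have hT : ∀ y k, ⟪y - K⁻¹ • D (D y), ψ k⟫ = (1 - (r k - r i) ^ 2 / K) * ⟪y, ψ k⟫ := by
    intro y k
    simp only [D, inner_sub_left, real_inner_smul_left, hRψ, map_sub, map_smul]
    ring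
  have hq : ∀ k ≠ i, |1 - (r k - r i) ^ 2 / K| < 1 := by
    intro k hk
    have hd : |r k - r i| ≤ 2 * ‖R‖ := (abs_sub _ _).trans
      (by linarith [abs_le_opNorm_of_hasSum hbi hR k, abs_le_opNorm_of_hasSum hbi hR i])
    have hlt : (r k - r i) ^ 2 < K := by
      have := pow_le_pow_left₀ (abs_nonneg _) hd 2
      rw [sq_abs] at this
      linarith
    have hpos : 0 < (r k - r i) ^ 2 / K :=
      div_pos (pow_pos (abs_pos.mpr (sub_ne_zero.mpr (hr.ne hk))) 2 |>.trans_eq (sq_abs _))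
        (by positivity)
    have hlt1 : (r k - r i) ^ 2 / K < 1 := (div_lt_one (by positivity)).mpr hlt
    rw [abs_lt]
    constructor <;> linarith
  have hmem := inner_smul_mem_of_mapsTo hbi hM₂ hupper hexp hsum hT (by simp) hq hV
    (fun y hy => V.sub_mem hy (V.smul_mem _ (hDV (hDV hy)))) hx
  exact (V.smul_mem_iff hi).mp hmem

end RieszBasis

theorem resolvent_invariant_subspace_is_spanned_by_eigenvectors_general
    {X : Type*} [NormedAddCommGroup X] [InnerProductSpace ℝ X]
    (φ ψ : ℕ → X)
    (hbi : ∀ i k : ℕ, ⟪ψ i, φ k⟫ = if i = k then (1 : ℝ) else 0)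
    (hspan : (Submodule.span ℝ (Set.range φ)).topologicalClosure = ⊤)
    (M₁ M₂ : ℝ) (hM₁ : 0 < M₁) (hM₁₂ : M₁ ≤ M₂)
    (hriesz : ∀ (n : ℕ) (α : ℕ → ℝ),
      M₁ * ∑ k ∈ Finset.range n, (α k) ^ 2
        ≤ ‖∑ k ∈ Finset.range n, α k • φ k‖ ^ 2 ∧
      ‖∑ k ∈ Finset.range n, α k • φ k‖ ^ 2
        ≤ M₂ * ∑ k ∈ Finset.range n, (α k) ^ 2)
    (lam : ℕ → ℝ) (hdistinct : Function.Injective lam)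
    (μ : ℝ)
    (R : X →L[ℝ] X)
    (hR : ∀ x : X, HasSum (fun i : ℕ => ((μ - lam i)⁻¹ * ⟪x, ψ i⟫) • φ i) (R x))
    (V : Submodule ℝ X) (hVclosed : IsClosed (V : Set X))
    (hRV : ∀ x ∈ V, R x ∈ V) :
    V = (Submodule.span ℝ (φ '' {i : ℕ | φ i ∈ V})).topologicalClosure := by
  have hM₂ : 0 ≤ M₂ := hM₁.le.trans hM₁₂
  have hlower := fun s α => (riesz_bounds_finset hriesz s α).1
  have hupper := fun s α => (riesz_bounds_finset hriesz s α).2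
  have hexp := tendsto_expansionPartialSum hbi hspan hM₁ hM₂ hlower hupper
  have hr : Function.Injective fun k => (μ - lam k)⁻¹ :=
    inv_injective.comp (sub_right_injective.comp hdistinct)
  have hφV : ∀ x ∈ V, ∀ k, ⟪x, ψ k⟫ ≠ 0 → φ k ∈ V := fun x hx k hk =>
    mem_of_inner_ne_zero hbi hM₂ hupper hexp (summable_sq_inner hbi hspan hM₁ hlower) hR hr
      hVclosed hRV hx hk
  refine le_antisymm (fun x hx => ?_)
    (Submodule.topologicalClosure_minimal _ (Submodule.span_le.mpr ?_) hVclosed)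
  · rw [← SetLike.mem_coe, Submodule.topologicalClosure_coe]
    refine mem_closure_of_tendsto (hexp x) (Eventually.of_forall fun n => ?_)
    rw [expansionPartialSum_apply]
    refine Submodule.sum_mem _ fun k _ => ?_
    by_cases hk : ⟪x, ψ k⟫ = 0
    · simp [hk]
    · exact Submodule.smul_mem _ _ (Submodule.subset_span ⟨k, hφV x hx k hk, rfl⟩)
  · rintro _ ⟨k, hk, rfl⟩
    exact hk

/-- For a Riesz-spectral (diagonalizable) operator with distinct eigenvalues, every
closed subspace invariant under the resolvent is the closed span of the eigenvectors
it contains. -/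
theorem resolvent_invariant_subspace_is_spanned_by_eigenvectors
    {X : Type*} [NormedAddCommGroup X] [InnerProductSpace ℝ X] [CompleteSpace X]
    (φ ψ : ℕ → X)
    (hbi : ∀ i k : ℕ, ⟪ψ i, φ k⟫ = if i = k then (1 : ℝ) else 0)
    (hspan : (Submodule.span ℝ (Set.range φ)).topologicalClosure = ⊤)
    (M₁ M₂ : ℝ) (hM₁ : 0 < M₁) (hM₁₂ : M₁ ≤ M₂)
    (hriesz : ∀ (n : ℕ) (α : ℕ → ℝ),
      M₁ * ∑ k ∈ Finset.range n, (α k) ^ 2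
        ≤ ‖∑ k ∈ Finset.range n, α k • φ k‖ ^ 2 ∧
      ‖∑ k ∈ Finset.range n, α k • φ k‖ ^ 2
        ≤ M₂ * ∑ k ∈ Finset.range n, (α k) ^ 2)
    (lam : ℕ → ℝ) (hdistinct : Function.Injective lam)
    (hsup : BddAbove (Set.range lam))
    (μ : ℝ) (hμ : ∀ i : ℕ, μ ≠ lam i)
    (R : X →L[ℝ] X)
    (hR : ∀ x : X, HasSum (fun i : ℕ => ((μ - lam i)⁻¹ * ⟪x, ψ i⟫) • φ i) (R x))
    (V : Submodule ℝ X) (hVclosed : IsClosed (V : Set X))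
    (hRV : ∀ x ∈ V, R x ∈ V) :
    V = (Submodule.span ℝ (φ '' {i : ℕ | φ i ∈ V})).topologicalClosure :=
  resolvent_invariant_subspace_is_spanned_by_eigenvectors_general φ ψ hbi hspan M₁ M₂ hM₁ hM₁₂
    hriesz lam hdistinct μ R hR V hVclosed hRV
end

section
/- Let X be a finite-dimensional vector space over ℝ, A : X → X and C : X → ℝ^q linear, let L₁, L₂ be one-dimensional subspaces of X, and let S* be the smallest subspace that contains L₂, is (A+DC)-invariant for some D, and equals the unobservable subspace of (HC, A+DC) for some linear H : ℝ^q → ℝ^{q_h} (an unobservability subspace containing L₂). If S* ∩ L₁ = 0, then there exists a linear observer (F, E, M, H) with F = induced map of A + DC on X/S*, such that the residual r = M e of the error dynamics ė = F e + P L₁ f₁ (P the canonical projection X → X/S*) is identically zero whenever f₁ ≡ 0 regardless of f₂, and P L₁ ≠ 0 so r can be nonzero when f₁ ≠ 0. -/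
/-- Geometric FDI in finite dimensions: if the minimal unobservability subspace `S`
containing `L₂` intersects `span{L₁}` trivially, then a detection filter exists on the
quotient `X ⧸ S`: there are `F`, `M` with `F ∘ P = P ∘ (A + DC)`, `M ∘ P = H ∘ C`, the
fault direction `L₂` is decoupled (`P L₂ = 0`), and `L₁` remains visible (`P L₁ ≠ 0`). -/
theorem geometric_FDI_solvable
    {X : Type*} [AddCommGroup X] [Module ℝ X] [FiniteDimensional ℝ X] {q qh : ℕ}
    (A : X →ₗ[ℝ] X) (C : X →ₗ[ℝ] (Fin q → ℝ))
    (L₁ L₂ : X) (hL₁ : L₁ ≠ 0) (hL₂ : L₂ ≠ 0)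
    (D : (Fin q → ℝ) →ₗ[ℝ] X) (H : (Fin q → ℝ) →ₗ[ℝ] (Fin qh → ℝ))
    (S : Submodule ℝ X)
    (hS : S = ⨅ n : ℕ, LinearMap.ker ((H ∘ₗ C) ∘ₗ (A + D ∘ₗ C) ^ n))
    (hL₂S : L₂ ∈ S)
    (hSmin : ∀ (qh' : ℕ) (D' : (Fin q → ℝ) →ₗ[ℝ] X)
        (H' : (Fin q → ℝ) →ₗ[ℝ] (Fin qh' → ℝ)),
        L₂ ∈ (⨅ n : ℕ, LinearMap.ker ((H' ∘ₗ C) ∘ₗ (A + D' ∘ₗ C) ^ n)) →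
        S ≤ ⨅ n : ℕ, LinearMap.ker ((H' ∘ₗ C) ∘ₗ (A + D' ∘ₗ C) ^ n))
    (hsep : S ⊓ Submodule.span ℝ {L₁} = ⊥) :
    ∃ (F : (X ⧸ S) →ₗ[ℝ] (X ⧸ S)) (M : (X ⧸ S) →ₗ[ℝ] (Fin qh → ℝ)),
      F ∘ₗ S.mkQ = S.mkQ ∘ₗ (A + D ∘ₗ C) ∧
      M ∘ₗ S.mkQ = H ∘ₗ C ∧
      S.mkQ L₂ = 0 ∧
      S.mkQ L₁ ≠ 0 := by
  -- S is invariant under A + DC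
  have hinv : S ≤ S.comap (A + D ∘ₗ C) := by
    intro x hx
    simp only [Submodule.mem_comap, hS, Submodule.mem_iInf, LinearMap.mem_ker] at hx ⊢
    intro n
    have := hx (n + 1)
    simpa [pow_succ, LinearMap.comp_assoc] using this
  -- S ≤ ker (H ∘ C)
  have hker : S ≤ LinearMap.ker (H ∘ₗ C) := by
    intro x hx
    rw [hS, Submodule.mem_iInf] at hx
    simpa using hx 0
  have hinv' : S ≤ LinearMap.ker (S.mkQ ∘ₗ (A + D ∘ₗ C)) := by
    intro x hx
    have h2 : (A + D ∘ₗ C) x ∈ S := hinv hx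
    simp only [LinearMap.mem_ker, LinearMap.comp_apply, Submodule.mkQ_apply,
      Submodule.Quotient.mk_eq_zero]
    exact h2
  refine ⟨S.liftQ (S.mkQ ∘ₗ (A + D ∘ₗ C)) hinv', S.liftQ (H ∘ₗ C) hker,
    S.liftQ_mkQ _ _, S.liftQ_mkQ _ _, ?_, ?_⟩
  · simpa [Submodule.Quotient.mk_eq_zero] using hL₂S
  · intro h
    rw [Submodule.mkQ_apply, Submodule.Quotient.mk_eq_zero] at h
    have : L₁ ∈ S ⊓ Submodule.span ℝ {L₁} :=
      ⟨h, Submodule.mem_span_singleton_self _⟩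
    rw [hsep] at this
    exact hL₁ (by simpa using this)
end

section
/- Let A be a bounded operator on a Hilbert space X, and let T(t) denote the C₀-semigroup generated by A. If there exists a bounded, self-adjoint, positive operator P on X such that ⟨Az, Pz⟩ + ⟨Pz, Az⟩ = −⟨z, z⟩ for all z ∈ D(A) = X, then the semigroup generated by A is exponentially stable: there exist M ≥ 1 and α > 0 with ‖T(t)‖ ≤ M e^{−αt} for all t ≥ 0. -/
open RealInnerProductSpace

/-- Lyapunov criterion for exponential stability (bounded-generator case): if there is a
bounded self-adjoint positive operator `P` with `⟨Az, Pz⟩ + ⟨Pz, Az⟩ = −⟨z, z⟩` for all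
`z`, then the semigroup `e^{tA}` is exponentially stable. -/
theorem lyapunov_exponential_stability_bounded
    {X : Type*} [NormedAddCommGroup X] [InnerProductSpace ℝ X] [CompleteSpace X]
    (A P : X →L[ℝ] X)
    (hPsa : IsSelfAdjoint P)
    (hPpos : ∀ z : X, 0 ≤ ⟪P z, z⟫)
    (hLyap : ∀ z : X, ⟪A z, P z⟫ + ⟪P z, A z⟫ = -⟪z, z⟫) :
    ∃ M α : ℝ, 1 ≤ M ∧ 0 < α ∧
      ∀ t : ℝ, 0 ≤ t → ‖NormedSpace.exp (t • A)‖ ≤ M * Real.exp (-α * t) := by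
  rcases subsingleton_or_nontrivial X with hX | hX
  · refine ⟨1, 1, le_rfl, one_pos, fun t ht => ?_⟩
    have h0 : ‖NormedSpace.exp (t • A)‖ ≤ 0 := by
      refine ContinuousLinearMap.opNorm_le_bound _ le_rfl fun x => ?_
      have : x = 0 := Subsingleton.elim _ _
      simp [this]
    have : (0 : ℝ) ≤ 1 * Real.exp (-1 * t) := by positivity
    linarith
  · obtain ⟨z₀, hz₀⟩ := exists_ne (0 : X)
    have hsym : ∀ x y : X, ⟪P x, y⟫ = ⟪x, P y⟫ := hPsa.isSymmetric
    -- key inequality 1 : ‖z‖ ≤ 2‖A‖‖Pz‖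
    have h1 : ∀ z : X, ‖z‖ ≤ 2 * ‖A‖ * ‖P z‖ := by
      intro z
      have hz2 : ‖z‖ ^ 2 = -2 * ⟪P z, A z⟫ := by
        have hL := hLyap z
        have : ⟪A z, P z⟫ = ⟪P z, A z⟫ := real_inner_comm _ _
        rw [this] at hL
        rw [← real_inner_self_eq_norm_sq]
        linarith
      have hcs : ⟪P z, A z⟫ ≥ -(‖P z‖ * ‖A z‖) := by
        have := abs_real_inner_le_norm (P z) (A z)
        have := abs_le.mp this
        linarith [this.1]
      have hAz : ‖A z‖ ≤ ‖A‖ * ‖z‖ := A.le_opNorm z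
      have h2 : ‖z‖ ^ 2 ≤ 2 * ‖A‖ * ‖P z‖ * ‖z‖ := by
        nlinarith [norm_nonneg (P z), norm_nonneg z, norm_nonneg (A z)]
      rcases eq_or_lt_of_le (norm_nonneg z) with hz | hz
      · rw [← hz]; positivity
      · nlinarith
    have hA0 : A ≠ 0 := by
      intro h
      have := h1 z₀
      rw [h] at this
      simp at this
      exact hz₀ this
    have hP0 : P ≠ 0 := by
      intro h
      have := h1 z₀
      rw [h] at this
      simp at this
      exact hz₀ this
    have hA : (0:ℝ) < ‖A‖ := norm_pos_iff.mpr hA0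
    have hP : (0:ℝ) < ‖P‖ := norm_pos_iff.mpr hP0
    -- Cauchy–Schwarz for the positive form ⟪P·,·⟫ : ‖Pz‖² ≤ ‖P‖⟪Pz,z⟫
    have hCS : ∀ z : X, ‖P z‖ ^ 2 ≤ ‖P‖ * ⟪P z, z⟫ := by
      intro z
      have hsw : ⟪P (P z), z⟫ = ⟪P z, P z⟫ := hsym (P z) z
      have hq : ∀ x : ℝ, 0 ≤ ⟪P (P z), P z⟫ * (x * x) + (2 * ⟪P z, P z⟫) * x + ⟪P z, z⟫ := by
        intro x
        have h0 := hPpos (z + x • (P z))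
        simp only [map_add, map_smul, inner_add_left, inner_add_right,
          real_inner_smul_left, real_inner_smul_right] at h0
        rw [hsw] at h0
        nlinarith [h0]
      have hd := discrim_le_zero hq
      rw [discrim] at hd
      have hPzw : ⟪P z, P z⟫ = ‖P z‖ ^ 2 := real_inner_self_eq_norm_sq _
      have hPww : ⟪P (P z), P z⟫ ≤ ‖P‖ * ‖P z‖ ^ 2 := by
        calc ⟪P (P z), P z⟫ ≤ ‖P (P z)‖ * ‖P z‖ := real_inner_le_norm _ _
          _ ≤ (‖P‖ * ‖P z‖) * ‖P z‖ := by
              have := P.le_opNorm (P z)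
              nlinarith [norm_nonneg (P z)]
          _ = ‖P‖ * ‖P z‖ ^ 2 := by ring
      rcases eq_or_lt_of_le (norm_nonneg (P z)) with hz | hz
      · rw [← hz]
        simpa using mul_nonneg hP.le (hPpos z)
      · have hPzz := hPpos z
        nlinarith [mul_le_mul_of_nonneg_right hPww hPzz, mul_pos hz hz]
    -- combined lower bound : ‖z‖² ≤ 4‖A‖²‖P‖⟪Pz,z⟫
    have hlow : ∀ z : X, ‖z‖ ^ 2 ≤ 4 * ‖A‖ ^ 2 * ‖P‖ * ⟪P z, z⟫ := by
      intro z
      have := h1 z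
      have := hCS z
      nlinarith [norm_nonneg z, norm_nonneg (P z)]
    -- upper bound : ⟪Pz,z⟫ ≤ ‖P‖‖z‖²
    have hupp : ∀ z : X, ⟪P z, z⟫ ≤ ‖P‖ * ‖z‖ ^ 2 := by
      intro z
      calc ⟪P z, z⟫ ≤ ‖P z‖ * ‖z‖ := real_inner_le_norm _ _
        _ ≤ (‖P‖ * ‖z‖) * ‖z‖ := by
            have := P.le_opNorm z
            nlinarith [norm_nonneg z]
        _ = ‖P‖ * ‖z‖ ^ 2 := by ring
    set α : ℝ := 1 / (2 * ‖P‖) with hα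
    set M : ℝ := 2 * ‖A‖ * ‖P‖ with hM
    have hαpos : 0 < α := by positivity
    have hMpos : 0 < M := by positivity
    have hM1 : 1 ≤ M := by
      have hz : 0 < ‖z₀‖ := norm_pos_iff.mpr hz₀
      have := h1 z₀
      have := P.le_opNorm z₀
      nlinarith
    refine ⟨M, α, hM1, hαpos, fun t ht => ?_⟩
    have hbnd : 0 ≤ M * Real.exp (-α * t) := by positivity
    refine ContinuousLinearMap.opNorm_le_bound _ hbnd fun z => ?_
    -- the trajectory
    set u : ℝ → X := fun s => NormedSpace.exp (s • A) z with hu_def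
    have hu : ∀ s : ℝ, HasDerivAt u (A (u s)) s := by
      intro s
      have h := (hasDerivAt_exp_smul_const' (𝕂 := ℝ) A s).clm_apply (hasDerivAt_const s z)
      simp only [ContinuousLinearMap.mul_apply, map_zero, add_zero] at h
      exact h
    set f : ℝ → ℝ := fun s => ⟪P (u s), u s⟫ with hf_def
    have hf : ∀ s : ℝ, HasDerivAt f (-‖u s‖ ^ 2) s := by
      intro s
      have h2 := (P.hasFDerivAt.comp_hasDerivAt s (hu s)).inner ℝ (hu s)
      simp only [Function.comp_apply, Function.comp] at h2
      have heq : ⟪P (u s), A (u s)⟫ + ⟪P (A (u s)), u s⟫ = -‖u s‖ ^ 2 := by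
        have hL := hLyap (u s)
        have h3 : ⟪P (A (u s)), u s⟫ = ⟪A (u s), P (u s)⟫ := by
          rw [hsym, real_inner_comm]
        rw [h3]
        rw [← real_inner_self_eq_norm_sq]
        linarith
      rw [heq] at h2
      exact h2
    -- Gronwall
    set g : ℝ → ℝ := fun s => Real.exp (s / ‖P‖) * f s with hg_def
    have hg : ∀ s : ℝ, HasDerivAt g
        (Real.exp (s / ‖P‖) * (1 / ‖P‖) * f s + Real.exp (s / ‖P‖) * (-‖u s‖ ^ 2)) s := by
      intro s
      have hexp : HasDerivAt (fun s : ℝ => Real.exp (s / ‖P‖))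
          (Real.exp (s / ‖P‖) * (1 / ‖P‖)) s := by
        have h := (Real.hasDerivAt_exp (s / ‖P‖)).comp s ((hasDerivAt_id s).div_const ‖P‖)
        exact h
      exact hexp.mul (hf s)
    have hg_nonpos : ∀ s : ℝ, deriv g s ≤ 0 := by
      intro s
      rw [(hg s).deriv]
      have hfu : f s ≤ ‖P‖ * ‖u s‖ ^ 2 := hupp (u s)
      have he : (0:ℝ) < Real.exp (s / ‖P‖) := Real.exp_pos _
      have hle : (1 / ‖P‖) * f s ≤ ‖u s‖ ^ 2 := by
        rw [div_mul_eq_mul_div, one_mul, div_le_iff₀ hP]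
        nlinarith
      nlinarith [mul_nonneg he.le (sub_nonneg.mpr hle)]
    have hanti : Antitone g :=
      antitone_of_deriv_nonpos (fun s => (hg s).differentiableAt) hg_nonpos
    have hu0 : u 0 = z := by
      simp [hu_def, NormedSpace.exp_zero]
    have hg0 : g 0 = ⟪P z, z⟫ := by
      simp [hg_def, hf_def, hu0]
    have hgt : g t ≤ ⟪P z, z⟫ := hg0 ▸ hanti ht
    -- assemble
    have hfle : f t ≤ Real.exp (-(t / ‖P‖)) * (‖P‖ * ‖z‖ ^ 2) := by
      have he := Real.exp_pos (t / ‖P‖)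
      rw [Real.exp_neg, inv_mul_eq_div, le_div_iff₀ he]
      calc f t * Real.exp (t / ‖P‖) = Real.exp (t / ‖P‖) * f t := mul_comm _ _
        _ ≤ ⟪P z, z⟫ := hgt
        _ ≤ ‖P‖ * ‖z‖ ^ 2 := hupp z
    have hexp2 : Real.exp (-α * t) ^ 2 = Real.exp (-(t / ‖P‖)) := by
      rw [sq, ← Real.exp_add]
      congr 1
      rw [hα]
      field_simp
      ring
    have hsq : ‖u t‖ ^ 2 ≤ (M * Real.exp (-α * t) * ‖z‖) ^ 2 := by
      have h4 := hlow (u t)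
      have hfp := hPpos (u t)
      have heq : (M * Real.exp (-α * t) * ‖z‖) ^ 2 =
          4 * ‖A‖ ^ 2 * ‖P‖ * (Real.exp (-(t / ‖P‖)) * (‖P‖ * ‖z‖ ^ 2)) := by
        rw [mul_pow, mul_pow, hexp2, hM]
        ring
      rw [heq]
      have h5 : 4 * ‖A‖ ^ 2 * ‖P‖ * f t ≤
          4 * ‖A‖ ^ 2 * ‖P‖ * (Real.exp (-(t / ‖P‖)) * (‖P‖ * ‖z‖ ^ 2)) := by
        apply mul_le_mul_of_nonneg_left hfle
        positivity
      linarith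
    have hRnn : 0 ≤ M * Real.exp (-α * t) * ‖z‖ := by positivity
    have hfin := Real.sqrt_le_sqrt hsq
    rw [Real.sqrt_sq (norm_nonneg _), Real.sqrt_sq hRnn] at hfin
    exact hfin
end
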